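/- Let A be a commutative ring. Every determinantally rational formal power series f ∈ A[[t]] is pointwise rational. -/

import Mathlib

/-- A formal power series `f = Σ aᵢ tⁱ ∈ A[[t]]` is *determinantally rational* if there exist
`m n : ℕ` such that for all `i > n` the `(m+1)×(m+1)` Hankel determinant
`det (a_{i+j+k})_{0 ≤ j,k ≤ m}` vanishes. -/
def DeterminantallyRational {A : Type*} [CommRing A] (f : PowerSeries A) : Prop :=
  ∃ m n : ℕ, ∀ i > n,
    Matrix.det (Matrix.of fun j k : Fin (m + 1) =>
      PowerSeries.coeff (i + j.1 + k.1) f) = 0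

/-- A formal power series `f ∈ A[[t]]` is *pointwise rational* if for every field `K` and every
ring homomorphism `φ : A → K` the image series `Σ φ(aᵢ) tⁱ` is rational over `K`. -/
def PointwiseRational {A : Type*} [CommRing A] (f : PowerSeries A) : Prop :=
  ∀ (K : Type*) [Field K], ∀ φ : A →+* K,
    ∃ g h : Polynomial K, g ≠ 0 ∧
      (g : PowerSeries K) * PowerSeries.map φ f = (h : PowerSeries K)


/-!
Over a field, Kronecker's argument turns the eventual vanishing of the `(m+1)`-Hankel
determinants into an eventual linear recurrence, by induction on `m`: once one `m`-Hankel
determinant vanishes, a comparison of left kernel vectors shows that all later ones vanish too;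
otherwise they are eventually invertible, and the solution of one Hankel system solves all later
ones, giving a recurrence of order `m`. A recurrence with coefficients `c` makes
`(1 - ∑ c_j t^(r-j)) f` a polynomial. Finally, Hankel determinants commute with ring
homomorphisms, so the hypothesis passes to every `φ : A → K` into a field.
-/

open Finset Matrix PowerSeries

def hankel {α : Type*} (b : ℕ → α) (p i : ℕ) : Matrix (Fin p) (Fin p) α :=
  Matrix.of fun j k => b (i + j + k)

lemma RingHom.map_hankel_det {R S : Type*} [CommRing R] [CommRing S] (φ : R →+* S) (b : ℕ → R)
    (p i : ℕ) : (hankel (fun s => φ (b s)) p i).det = φ (hankel b p i).det :=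
  (RingHom.map_det φ _).symm

lemma sum_range_mul_eq_vecMul_hankel {R : Type*} [Semiring R] (b y : ℕ → R) (p i : ℕ)
    (k : Fin p) :
    ∑ s ∈ range p, y s * b (i + s + k) = ((fun j : Fin p => y j) ᵥ* hankel b p i) k := by
  rw [← Fin.sum_univ_eq_sum_range (fun s => y s * b (i + s + k))]
  rfl

section Field

variable {K : Type*} [Field K] {b : ℕ → K} {p i : ℕ}

lemma exists_hankel_relation_of_det_eq_zero (h : (hankel b p i).det = 0) :
    ∃ y : ℕ → K, (∃ s < p, y s ≠ 0) ∧ (∀ s ≥ p, y s = 0) ∧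
      ∀ k < p, ∑ s ∈ range p, y s * b (i + s + k) = 0 := by
  obtain ⟨v, hv, hv0⟩ := exists_vecMul_eq_zero_iff.2 h
  have hrestrict : (fun j : Fin p => if hj : j.1 < p then v ⟨j, hj⟩ else 0) = v := by
    ext j; simp [j.2]
  obtain ⟨j, hj⟩ := Function.ne_iff.1 hv
  refine ⟨fun s => if hs : s < p then v ⟨s, hs⟩ else 0, ⟨j, j.2, by simpa [j.2] using hj⟩,
    fun s hs => dif_neg (by omega), fun k hk => ?_⟩
  rw [sum_range_mul_eq_vecMul_hankel b _ p i ⟨k, hk⟩, hrestrict, hv0, Pi.zero_apply]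

lemma hankel_relation_eq_zero_of_det_ne_zero (h : (hankel b p i).det ≠ 0) {y : ℕ → K}
    (hy : ∀ k < p, ∑ s ∈ range p, y s * b (i + s + k) = 0) : ∀ s < p, y s = 0 := by
  by_contra! ⟨s, hs, hys⟩
  refine h (exists_vecMul_eq_zero_iff.1 ⟨fun j : Fin p => y j, fun h0 => hys ?_, ?_⟩)
  · exact congrFun h0 ⟨s, hs⟩
  · ext k
    rw [← sum_range_mul_eq_vecMul_hankel]
    exact hy k k.2

lemma exists_hankel_solution_of_det_ne_zero (h : (hankel b p i).det ≠ 0) :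
    ∃ c : ℕ → K, ∀ k < p, ∑ s ∈ range p, c s * b (i + s + k) = b (i + p + k) := by
  set w : Fin p → K := (fun k : Fin p => b (i + p + k)) ᵥ* (hankel b p i)⁻¹
  have hw : w ᵥ* hankel b p i = fun k : Fin p => b (i + p + k) := by
    rw [vecMul_vecMul, nonsing_inv_mul _ (isUnit_iff_ne_zero.2 h), vecMul_one]
  have hrestrict : (fun j : Fin p => if hj : j.1 < p then w ⟨j, hj⟩ else 0) = w := by
    ext j; simp [j.2]
  refine ⟨fun s => if hs : s < p then w ⟨s, hs⟩ else 0, fun k hk => ?_⟩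
  rw [sum_range_mul_eq_vecMul_hankel b _ p i ⟨k, hk⟩, hrestrict, hw]

lemma eq_zero_of_hankel_relation_of_head_eq_zero (hd : (hankel b p (i + 1)).det ≠ 0)
    {v : ℕ → K} (hv0 : v 0 = 0)
    (hv : ∀ k < p, ∑ s ∈ range (p + 1), v s * b (i + s + k) = 0) : ∀ s ≤ p, v s = 0 := by
  have hshift : ∀ k < p, ∑ s ∈ range p, v (s + 1) * b (i + 1 + s + k) = 0 := by
    intro k hk
    simpa [sum_range_succ', hv0, add_right_comm _ 1, add_assoc] using hv k hk
  rintro (_ | s) hs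
  · exact hv0
  · exact hankel_relation_eq_zero_of_det_ne_zero hd hshift s (by omega)

lemma hankel_solution_extend (hH : (hankel b (p + 1) i).det = 0)
    (hd : (hankel b p i).det ≠ 0) {c : ℕ → K}
    (hc : ∀ k < p, ∑ s ∈ range p, c s * b (i + s + k) = b (i + p + k)) :
    ∀ k ≤ p, ∑ s ∈ range p, c s * b (i + s + k) = b (i + p + k) := by
  obtain ⟨x, ⟨sx, hsx, hxsx⟩, -, hx⟩ := exists_hankel_relation_of_det_eq_zero hH
  have hxp : x p ≠ 0 := by
    intro hxp
    have hx' : ∀ k < p, ∑ s ∈ range p, x s * b (i + s + k) = 0 := fun k hk => by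
      simpa [sum_range_succ, hxp] using hx k (by omega)
    obtain hsx | rfl := Nat.lt_succ_iff_lt_or_eq.1 hsx
    · exact hxsx (hankel_relation_eq_zero_of_det_ne_zero hd hx' sx hsx)
    · exact hxsx hxp
  set e : ℕ → K := fun k => ∑ s ∈ range p, c s * b (i + s + k) - b (i + p + k)
  -- `e = H (c, -1)` for the `(p+1)`-Hankel matrix `H`, whose left kernel contains `x`.
  have hxe : ∑ k ∈ range (p + 1), x k * e k = 0 := by
    have hHc : ∑ k ∈ range (p + 1), x k * ∑ s ∈ range p, c s * b (i + s + k) = 0 := by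
      simp_rw [mul_sum]
      rw [sum_comm]
      refine sum_eq_zero fun s hs => ?_
      simpa [mul_sum, mul_left_comm, add_right_comm i s] using
        congrArg (c s * ·) (hx s (Nat.lt_succ_of_lt (mem_range.1 hs)))
    have hbp : ∑ k ∈ range (p + 1), x k * b (i + p + k) = 0 := by
      simpa [add_right_comm i _ p] using hx p (by omega)
    simp only [e, mul_sub, sum_sub_distrib, hHc, hbp, sub_zero]
  have hep : e p = 0 := by
    rw [sum_range_succ, sum_eq_zero fun k hk => by simp [e, hc k (mem_range.1 hk)],
      zero_add] at hxe
    exact (mul_eq_zero.1 hxe).resolve_left hxp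
  intro k hk
  obtain hk | rfl := hk.lt_or_eq
  · exact hc k hk
  · exact sub_eq_zero.1 hep

lemma hankel_det_succ_eq_zero (hp : 0 < p) (hH : (hankel b (p + 1) i).det = 0)
    (hq : (hankel b p i).det = 0) : (hankel b p (i + 1)).det = 0 := by
  by_contra hd
  obtain ⟨y, ⟨sy, hsy, hysy⟩, hy_supp, hy⟩ := exists_hankel_relation_of_det_eq_zero hq
  obtain ⟨x, ⟨sx, hsx, hxsx⟩, -, hx⟩ := exists_hankel_relation_of_det_eq_zero hH
  have hy' : ∀ k < p, ∑ s ∈ range (p + 1), y s * b (i + s + k) = 0 := fun k hk => by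
    simpa [sum_range_succ, hy_supp p le_rfl] using hy k hk
  have hx' : ∀ k < p, ∑ s ∈ range (p + 1), x s * b (i + s + k) = 0 :=
    fun k hk => hx k (by omega)
  have hy0 : y 0 ≠ 0 := fun h0 =>
    hysy (eq_zero_of_hankel_relation_of_head_eq_zero hd h0 hy' sy hsy.le)
  have hx0 : x 0 ≠ 0 := fun h0 =>
    hxsx (eq_zero_of_hankel_relation_of_head_eq_zero hd h0 hx' sx (by omega))
  -- `y 0 • x - x 0 • y` is a relation with vanishing head, so it vanishes; at index `p` this
  -- forces `x p = 0`.
  have hxp : x p = 0 := by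
    have hu := eq_zero_of_hankel_relation_of_head_eq_zero hd
      (v := fun s => y 0 * x s - x 0 * y s) (by ring) (fun k hk => by
        simp only [sub_mul, mul_assoc, sum_sub_distrib, ← mul_sum, hx' k hk, hy' k hk,
          mul_zero, sub_zero]) p le_rfl
    simpa [hy_supp p le_rfl, hy0] using hu
  have hx_shift : ∀ k < p, ∑ s ∈ range p, x s * b (i + 1 + s + k) = 0 := fun k hk => by
    simpa [sum_range_succ, hxp, add_assoc, add_left_comm 1, add_comm 1 k] using
      hx (k + 1) (by omega)
  exact hx0 (hankel_relation_eq_zero_of_det_ne_zero hd hx_shift 0 hp)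

lemma exists_recurrence_of_hankel_det_ne_zero {n : ℕ}
    (hH : ∀ i > n, (hankel b (p + 1) i).det = 0) (hd : ∀ i > n, (hankel b p i).det ≠ 0) :
    ∃ c : ℕ → K, ∀ s > n, b (s + p) = ∑ j ∈ range p, c j * b (s + j) := by
  obtain ⟨c, hc⟩ := exists_hankel_solution_of_det_ne_zero (hd (n + 1) (by omega))
  have hsol : ∀ i > n, ∀ k ≤ p, ∑ s ∈ range p, c s * b (i + s + k) = b (i + p + k) := by
    intro i hi
    induction i, hi using Nat.le_induction with
    | base => exact hankel_solution_extend (hH _ (by omega)) (hd _ (by omega)) hc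
    | succ i hi ih =>
      refine hankel_solution_extend (hH _ (by omega)) (hd _ (by omega)) fun k hk => ?_
      simpa [add_assoc, add_left_comm 1, add_comm 1 k] using ih (k + 1) hk
  exact ⟨c, fun s hs => by simpa using (hsol s hs 0 p.zero_le).symm⟩

-- Kronecker's theorem on Hankel determinants.
theorem exists_recurrence_of_hankel_det_eq_zero {m n : ℕ}
    (h : ∀ i > n, (hankel b (m + 1) i).det = 0) :
    ∃ r N : ℕ, ∃ c : ℕ → K, ∀ s > N, b (s + r) = ∑ j ∈ range r, c j * b (s + j) := by
  induction m generalizing n with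
  | zero => exact ⟨0, n, 0, fun s hs => by simpa [hankel] using h s hs⟩
  | succ m ih =>
    by_cases hsing : ∃ j > n, (hankel b (m + 1) j).det = 0
    · obtain ⟨j, hj, hdet⟩ := hsing
      have hprop : ∀ i ≥ j, (hankel b (m + 1) i).det = 0 := by
        intro i hi
        induction i, hi using Nat.le_induction with
        | base => exact hdet
        | succ i hi ih => exact hankel_det_succ_eq_zero m.succ_pos (h i (by omega)) ih
      exact ih fun i hi => hprop i hi.le
    · push Not at hsing
      exact ⟨m + 1, n, exists_recurrence_of_hankel_det_ne_zero h hsing⟩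

end Field

lemma PowerSeries.exists_coe_eq_of_coeff_eq_zero {R : Type*} [CommSemiring R] {F : R⟦X⟧}
    {M : ℕ} (h : ∀ s ≥ M, coeff s F = 0) : ∃ q : Polynomial R, (q : R⟦X⟧) = F := by
  refine ⟨trunc M F, PowerSeries.ext fun s => ?_⟩
  rw [Polynomial.coeff_coe, coeff_trunc]
  split_ifs with hs
  · rfl
  · exact (h s (by omega)).symm

lemma PowerSeries.exists_polynomial_mul_eq_polynomial_of_recurrence {R : Type*} [CommRing R]
    [Nontrivial R] {F : R⟦X⟧} {r N : ℕ} {c : ℕ → R}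
    (hrec : ∀ s > N, coeff (s + r) F = ∑ j ∈ range r, c j * coeff (s + j) F) :
    ∃ g h : Polynomial R, g ≠ 0 ∧ (g : R⟦X⟧) * F = h := by
  set g : Polynomial R := 1 - ∑ j ∈ range r, Polynomial.C (c j) * Polynomial.X ^ (r - j)
  have hg : g.coeff 0 = 1 := by
    simp only [g, Polynomial.coeff_sub, Polynomial.coeff_one_zero, Polynomial.finsetSum_coeff,
      Polynomial.coeff_C_mul_X_pow]
    rw [sum_eq_zero fun j hj => if_neg (by have := mem_range.1 hj; omega), sub_zero]
  have hgF : ∀ s > N, coeff (s + r) ((g : R⟦X⟧) * F) = 0 := by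
    intro s hs
    have hterm : ∀ j ∈ range r,
        coeff (s + r) (C (c j) * X ^ (r - j) * F) = c j * coeff (s + j) F := by
      intro j hj
      rw [mem_range] at hj
      rw [mul_assoc, coeff_C_mul, coeff_X_pow_mul', if_pos (by omega)]
      congr 3
      omega
    have hcoe : (g : R⟦X⟧) = 1 - ∑ j ∈ range r, C (c j) * X ^ (r - j) := by
      rw [← Polynomial.coeToPowerSeries.ringHom_apply]
      simp only [g, map_sub, map_one, map_sum, map_mul, map_pow,
        Polynomial.coeToPowerSeries.ringHom_apply, Polynomial.coe_C, Polynomial.coe_X]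
    rw [hcoe, sub_mul, one_mul, map_sub, sum_mul, map_sum, sum_congr rfl hterm, hrec s hs,
      sub_self]
  obtain ⟨h, hh⟩ := exists_coe_eq_of_coeff_eq_zero (M := N + 1 + r) fun s hs => by
    simpa [Nat.sub_add_cancel (show r ≤ s by omega)] using hgF (s - r) (by omega)
  exact ⟨g, h, fun h0 => by simp [h0] at hg, hh.symm⟩

/-- Every determinantally rational power series is pointwise rational. -/
theorem determinantallyRational_implies_pointwiseRational
    {A : Type*} [CommRing A] (f : PowerSeries A)
    (hf : DeterminantallyRational f) : PointwiseRational f := by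
  obtain ⟨m, n, hdet⟩ := hf
  intro K _ φ
  have hdetK : ∀ i > n, (hankel (fun s => φ (coeff s f)) (m + 1) i).det = 0 := fun i hi => by
    rw [RingHom.map_hankel_det, hankel, hdet i hi, map_zero]
  obtain ⟨r, N, c, hrec⟩ := exists_recurrence_of_hankel_det_eq_zero hdetK
  exact exists_polynomial_mul_eq_polynomial_of_recurrence (F := map φ f)
    (by simpa only [coeff_map] using hrec)
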